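/- arXiv:1608.06844 — 10 statements merged into one kernel-verified Lean document; each statement's English description precedes it below -/
import Mathlib

section
/- Let b := (1 + i − j + k)/2 and c := (1 + i − j − k)/2 in the real quaternions ℍ. Then for every quaternion a ∈ ℍ one has i·(b·a·c) = b·(−(j·a))·c. In other words, the map φ(a) := b·a·c satisfies A₁ ∘ φ = φ ∘ A₊, where A₁(a) = i·a and A₊(a) = −j·a. -/
/-- The imaginary unit `i` of the quaternions. -/
noncomputable def qi : Quaternion ℝ := ⟨0, 1, 0, 0⟩

/-- The imaginary unit `j` of the quaternions. -/
noncomputable def qj : Quaternion ℝ := ⟨0, 0, 1, 0⟩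

/-- The imaginary unit `k` of the quaternions. -/
noncomputable def qk : Quaternion ℝ := ⟨0, 0, 0, 1⟩

/-- With `b = (1 + i − j + k)/2` and `c = (1 + i − j − k)/2`, the map
`φ(a) = b·a·c` satisfies `A₁ ∘ φ = φ ∘ A₊`, where `A₁(a) = i·a` and
`A₊(a) = −j·a`. -/
theorem conj_A_plus_to_A_one :
    ∀ a : Quaternion ℝ,
      qi * (((1 + qi - qj + qk) / 2) * a * ((1 + qi - qj - qk) / 2)) =
        ((1 + qi - qj + qk) / 2) * (-(qj * a)) * ((1 + qi - qj - qk) / 2) := by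
  have h2 : (2 : Quaternion ℝ)⁻¹ = (((2 : ℝ)⁻¹ : ℝ) : Quaternion ℝ) := by
    have h : (2 : Quaternion ℝ) = ((2 : ℝ) : Quaternion ℝ) := by norm_cast
    rw [Quaternion.coe_inv, ← h]
  intro a
  ext <;> simp [div_eq_mul_inv, h2, -Quaternion.coe_inv] <;> simp [qi, qj, qk, Quaternion.re_one, Quaternion.imI_one, Quaternion.imJ_one, Quaternion.imK_one] <;> ring
end

section
/- Let b := (1 + i − j + k)/2 and c := (1 + i − j − k)/2 in the real quaternions ℍ. Then for every quaternion a ∈ ℍ one has (b·a·c)·i = b·(−(a·j))·c. In other words, the map φ(a) := b·a·c satisfies A₃ ∘ φ = φ ∘ A₋, where A₃(a) = a·i and A₋(a) = −a·j. -/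
/-!
Since `b` acts on the left, `φ(a)·i = φ(−a·j)` only needs `c·i = −j·c`, i.e. that conjugation
by `c` carries `i` to `−j`. For `2c = 1 + i − j − k` this is a four-term computation with the
multiplication table of `i, j, k`, and the factor `1/2` is real, hence central.
-/

open scoped Quaternion

/- The first `simp` expands products componentwise; unfolding `qi` earlier would leave
`QuaternionAlgebra` terms that the `Quaternion` simp lemmas no longer match. -/
theorem qi_mul_qi : qi * qi = -1 := by ext <;> simp <;> simp [qi]

theorem qj_mul_qj : qj * qj = -1 := by ext <;> simp <;> simp [qj]

theorem qj_mul_qi : qj * qi = -qk := by ext <;> simp <;> simp [qi, qj, qk]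

theorem qj_mul_qk : qj * qk = qi := by ext <;> simp <;> simp [qi, qj, qk]

theorem qk_mul_qi : qk * qi = qj := by ext <;> simp <;> simp [qi, qj, qk]

theorem one_add_qi_sub_qj_sub_qk_mul_qi :
    (1 + qi - qj - qk) * qi = -(qj * (1 + qi - qj - qk)) := by
  simp only [add_mul, sub_mul, mul_add, mul_sub, one_mul, mul_one, qi_mul_qi, qj_mul_qj,
    qj_mul_qi, qj_mul_qk, qk_mul_qi]
  abel

theorem mul_mul_eq_neg_mul_of_commute {R : Type*} [Ring R] {p x y z : R} (hz : Commute z x)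
    (h : p * x = -(y * p)) : p * z * x = -(y * (p * z)) := by
  rw [mul_assoc, hz.eq, ← mul_assoc, h, neg_mul, mul_assoc]

theorem mul_mul_mul_eq_of_mul_eq_neg_mul {R : Type*} [Ring R] {c x y : R}
    (h : c * x = -(y * c)) (b a : R) : b * a * c * x = b * (-(a * y)) * c := by
  rw [mul_assoc, h]
  noncomm_ring

/-- With `b = (1 + i − j + k)/2` and `c = (1 + i − j − k)/2`, the map
`φ(a) = b·a·c` satisfies `A₃ ∘ φ = φ ∘ A₋`, where `A₃(a) = a·i` and
`A₋(a) = −a·j`. -/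
theorem conj_A_minus_to_A_three :
    ∀ a : Quaternion ℝ,
      (((1 + qi - qj + qk) / 2) * a * ((1 + qi - qj - qk) / 2)) * qi =
        ((1 + qi - qj + qk) / 2) * (-(a * qj)) * ((1 + qi - qj - qk) / 2) := by
  have hc : (1 + qi - qj - qk) / 2 * qi = -(qj * ((1 + qi - qj - qk) / 2)) := by
    rw [div_eq_mul_inv]
    exact mul_mul_eq_neg_mul_of_commute (Commute.ofNat_left 2 qi).inv_left₀
      one_add_qi_sub_qj_sub_qk_mul_qi
  exact mul_mul_mul_eq_of_mul_eq_neg_mul hc _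
end

section
/- Let b := (1 + i − j + k)/2 and c := (1 + i − j − k)/2 in the real quaternions ℍ. Then b and c have norm 1, and for every quaternion a = a₀ + a₁i + a₂j + a₃k ∈ ℍ one has b·a·c = a₂ + a₀i + a₁j + a₃k. Consequently the map φ(a) := b·a·c preserves the quaternion norm and restricts to a bijection of the unit sphere S³ = {a ∈ ℍ : ‖a‖ = 1}. -/
lemma two_re' : (2 : Quaternion ℝ).re = 2 := rfl
lemma two_imI' : (2 : Quaternion ℝ).imI = 0 := rfl
lemma two_imJ' : (2 : Quaternion ℝ).imJ = 0 := rfl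
lemma two_imK' : (2 : Quaternion ℝ).imK = 0 := rfl

lemma qtwo_ne_zero : (2 : Quaternion ℝ) ≠ 0 := by
  intro h
  have h2 : (2 : Quaternion ℝ).re = (0 : Quaternion ℝ).re := congrArg _ h
  rw [two_re'] at h2
  exact two_ne_zero (h2.trans rfl)

lemma beq' : (1 + qi - qj + qk) / 2 = (⟨1/2, 1/2, -(1/2), 1/2⟩ : Quaternion ℝ) := by
  refine (div_eq_iff qtwo_ne_zero).2 ?_
  rw [show (2 : Quaternion ℝ) = ⟨2, 0, 0, 0⟩ from rfl]
  erw [QuaternionAlgebra.mk_mul_mk]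
  ext <;> simp <;> norm_num [qi, qj, qk, show (1 : Quaternion ℝ).re = 1 from rfl, show (1 : Quaternion ℝ).imI = 0 from rfl, show (1 : Quaternion ℝ).imJ = 0 from rfl, show (1 : Quaternion ℝ).imK = 0 from rfl]

lemma ceq' : (1 + qi - qj - qk) / 2 = (⟨1/2, 1/2, -(1/2), -(1/2)⟩ : Quaternion ℝ) := by
  refine (div_eq_iff qtwo_ne_zero).2 ?_
  rw [show (2 : Quaternion ℝ) = ⟨2, 0, 0, 0⟩ from rfl]
  erw [QuaternionAlgebra.mk_mul_mk]
  ext <;> simp <;> norm_num [qi, qj, qk, show (1 : Quaternion ℝ).re = 1 from rfl, show (1 : Quaternion ℝ).imI = 0 from rfl, show (1 : Quaternion ℝ).imJ = 0 from rfl, show (1 : Quaternion ℝ).imK = 0 from rfl]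

lemma norm_one_of_normSq (q : Quaternion ℝ) (h : Quaternion.normSq q = 1) : ‖q‖ = 1 := by
  have := Quaternion.normSq_eq_norm_mul_self q
  nlinarith [norm_nonneg q]

lemma nb' : ‖(1 + qi - qj + qk) / 2‖ = 1 := by
  apply norm_one_of_normSq
  rw [beq']
  erw [Quaternion.normSq_def']
  simp
  norm_num

lemma nc' : ‖(1 + qi - qj - qk) / 2‖ = 1 := by
  apply norm_one_of_normSq
  rw [ceq']
  erw [Quaternion.normSq_def']
  simp
  norm_num

lemma formula' (a₀ a₁ a₂ a₃ : ℝ) :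
    ((1 + qi - qj + qk) / 2) * ⟨a₀, a₁, a₂, a₃⟩ * ((1 + qi - qj - qk) / 2) =
      (⟨a₂, a₀, a₁, a₃⟩ : Quaternion ℝ) := by
  rw [beq', ceq']
  erw [QuaternionAlgebra.mk_mul_mk]
  ext <;> simp <;> ring

/-- The unit quaternions `b = (1 + i − j + k)/2` and `c = (1 + i − j − k)/2`
satisfy `b·(a₀ + a₁i + a₂j + a₃k)·c = a₂ + a₀i + a₁j + a₃k`; in particular the
map `φ(a) = b·a·c` is norm-preserving and restricts to a bijection of the unit
sphere `S³ = {a ∈ ℍ : ‖a‖ = 1}`. -/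
theorem phi_formula_and_sphere_bijection :
    ‖(1 + qi - qj + qk) / 2‖ = 1 ∧ ‖(1 + qi - qj - qk) / 2‖ = 1 ∧
    (∀ a₀ a₁ a₂ a₃ : ℝ,
      ((1 + qi - qj + qk) / 2) * ⟨a₀, a₁, a₂, a₃⟩ * ((1 + qi - qj - qk) / 2) =
        (⟨a₂, a₀, a₁, a₃⟩ : Quaternion ℝ)) ∧
    (∀ a : Quaternion ℝ,
      ‖((1 + qi - qj + qk) / 2) * a * ((1 + qi - qj - qk) / 2)‖ = ‖a‖) ∧
    Set.BijOn (fun a : Quaternion ℝ => ((1 + qi - qj + qk) / 2) * a * ((1 + qi - qj - qk) / 2))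
      {a : Quaternion ℝ | ‖a‖ = 1} {a : Quaternion ℝ | ‖a‖ = 1} := by
  have hb := nb'
  have hc := nc'
  have hbne : (1 + qi - qj + qk) / 2 ≠ 0 := fun h => by simp [h] at hb
  have hcne : (1 + qi - qj - qk) / 2 ≠ 0 := fun h => by simp [h] at hc
  have hnorm : ∀ a : Quaternion ℝ,
      ‖((1 + qi - qj + qk) / 2) * a * ((1 + qi - qj - qk) / 2)‖ = ‖a‖ := by
    intro a
    rw [norm_mul, norm_mul, hb, hc, one_mul, mul_one]
  refine ⟨hb, hc, formula', hnorm, ?_, ?_, ?_⟩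
  · intro a ha
    simp only [Set.mem_setOf_eq] at ha ⊢
    rw [hnorm, ha]
  · intro x _ y _ h
    simp only at h
    have h1 := mul_right_cancel₀ hcne h
    exact mul_left_cancel₀ hbne h1
  · intro y hy
    simp only [Set.mem_setOf_eq] at hy
    refine ⟨((1 + qi - qj + qk) / 2)⁻¹ * y * ((1 + qi - qj - qk) / 2)⁻¹, ?_, ?_⟩
    · simp only [Set.mem_setOf_eq, norm_mul, norm_inv, hb, hc, hy]
      norm_num
    · simp only
      rw [← mul_assoc, ← mul_assoc, mul_inv_cancel₀ hbne, one_mul, mul_assoc,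
        inv_mul_cancel₀ hcne, mul_one]
end

section
/- The group with presentation ⟨a, h | a⁻¹ha = h⁻¹, a² = h⟩ (i.e. the presented group on two generators a, h with relator words a⁻¹·h·a·h and a²·h⁻¹) is isomorphic to the cyclic group ℤ/4. -/
/-- The relators `a⁻¹·h·a·h` and `a²·h⁻¹` in the free group on two
generators `a = of 0` and `h = of 1`. -/
def lensRels : Set (FreeGroup (Fin 2)) :=
  {(FreeGroup.of 0)⁻¹ * FreeGroup.of 1 * FreeGroup.of 0 * FreeGroup.of 1,
    (FreeGroup.of 0) ^ 2 * (FreeGroup.of 1)⁻¹}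

/-!
Substituting `h = a²` into `a⁻¹ha = h⁻¹` gives `a⁴ = 1`, so the group is cyclic, generated by `a`,
of order dividing `4`. The assignment `a ↦ 1`, `h ↦ 2` respects both relators, so it defines a
homomorphism to `ℤ/4` under which `a` has order `4`; hence `a` has order exactly `4`.
-/

theorem orderOf_eq_of_pow_eq_one_of_orderOf_map {G H : Type*} [Monoid G] [Monoid H] (f : G →* H)
    {g : G} {n : ℕ} (hg : g ^ n = 1) (hfg : orderOf (f g) = n) : orderOf g = n :=
  Nat.dvd_antisymm (orderOf_dvd_of_pow_eq_one hg) (hfg ▸ orderOf_map_dvd f g)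

namespace LensRels

open PresentedGroup

local notation "a" => (PresentedGroup.of 0 : PresentedGroup lensRels)
local notation "h" => (PresentedGroup.of 1 : PresentedGroup lensRels)

theorem of_zero_sq : a ^ 2 = h :=
  mk_eq_mk_of_mul_inv_mem (Or.inr rfl)

theorem of_zero_pow_four : a ^ 4 = 1 := by
  have hconj : a⁻¹ * h * a * h = 1 := one_of_mem (Or.inl rfl)
  rw [← of_zero_sq] at hconj
  rw [← hconj]
  group

theorem mem_zpowers_of_zero (x : PresentedGroup lensRels) : x ∈ Subgroup.zpowers a := by
  suffices Subgroup.closure (Set.range PresentedGroup.of) ≤ Subgroup.zpowers a by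
    exact this (by rw [closure_range_of]; trivial)
  rw [Subgroup.closure_le, Set.range_subset_iff]
  intro i
  fin_cases i
  · exact Subgroup.mem_zpowers _
  · exact of_zero_sq ▸ Subgroup.pow_mem _ (Subgroup.mem_zpowers _) 2

def toZMod4 : PresentedGroup lensRels →* Multiplicative (ZMod 4) :=
  toGroup (f := ![Multiplicative.ofAdd 1, Multiplicative.ofAdd 2]) (by
    rintro r (rfl | rfl) <;> decide)

theorem orderOf_of_zero : orderOf a = 4 := by
  refine orderOf_eq_of_pow_eq_one_of_orderOf_map toZMod4 of_zero_pow_four ?_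
  rw [toZMod4, toGroup.of, Matrix.cons_val_zero, orderOf_ofAdd_eq_addOrderOf, ZMod.addOrderOf_one]

theorem card_eq_four : Nat.card (PresentedGroup lensRels) = 4 :=
  (orderOf_eq_card_of_forall_mem_zpowers mem_zpowers_of_zero).symm.trans orderOf_of_zero

end LensRels

/-- The group `⟨a, h | a⁻¹ha = h⁻¹, a² = h⟩` is isomorphic to `ℤ/4`. -/
theorem presented_group_is_Z4 :
    Nonempty (PresentedGroup lensRels ≃* Multiplicative (ZMod 4)) :=
  ⟨(zmodMulEquivOfGenerator LensRels.mem_zpowers_of_zero LensRels.card_eq_four).symm⟩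
end

section
/- Let p, q, r, s be integers with p > 0 and qs + pr = 1, and let α₁⁰, α₂⁰ be nonzero integers with gcd(α₁⁰,α₂⁰) = 1. Set u := gcd(p, sα₁⁰ − α₂⁰), α := p/u, α₁' := (sα₁⁰ − α₂⁰)/u, α₁ := α·α₁⁰ and α₂ := α·α₂⁰. Then gcd(α₁, α₁') = 1. -/
/-! Dividing `p` and `sα₁⁰ − α₂⁰` by their gcd `u` makes `α = p/u` coprime to `α₁'`. Since
`u α₁' = sα₁⁰ − α₂⁰`, any common divisor of `α₁⁰` and `α₁'` divides `α₂⁰`, so `α₁⁰` is coprime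
to `α₁'` as well; hence so is the product `α₁ = α α₁⁰`. -/

theorem IsCoprime.of_mul_eq_mul_sub {R : Type*} [CommRing R] {a b c s u : R}
    (h : IsCoprime a b) (hc : u * c = s * a - b) : IsCoprime a c := by
  obtain ⟨x, y, hxy⟩ := h
  exact ⟨x + y * s, -(y * u), by linear_combination hxy - y * hc⟩

theorem algorithm_alpha1_coprime_general (p s α₁₀ α₂₀ : ℤ)
    (hp : 0 < p) (hcop : Int.gcd α₁₀ α₂₀ = 1)
    (u α α₁' α₁ : ℤ)
    (hu : u = Int.gcd p (s * α₁₀ - α₂₀))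
    (hα : α = p / u)
    (hα₁' : α₁' = (s * α₁₀ - α₂₀) / u)
    (hα₁ : α₁ = α * α₁₀) :
    Int.gcd α₁ α₁' = 1 := by
  have hu_pos : 0 < Int.gcd p (s * α₁₀ - α₂₀) := Int.gcd_pos_of_ne_zero_left _ hp.ne'
  have hα_cop : IsCoprime α α₁' := by
    rw [Int.isCoprime_iff_gcd_eq_one, hα, hα₁', hu]
    exact Int.gcd_div_gcd_div_gcd hu_pos
  have hu_mul : u * α₁' = s * α₁₀ - α₂₀ := by
    rw [hα₁', Int.mul_ediv_cancel' (hu ▸ Int.gcd_dvd_right _ _)]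
  have hα₁₀_cop : IsCoprime α₁₀ α₁' :=
    (Int.isCoprime_iff_gcd_eq_one.mpr hcop).of_mul_eq_mul_sub hu_mul
  rw [hα₁, ← Int.isCoprime_iff_gcd_eq_one]
  exact hα_cop.mul_left hα₁₀_cop

/-- In the algorithm constructing a Seifert fibration of `L(p,q)` from coprime
nonzero integers `α₁⁰, α₂⁰`: with `u = gcd(p, sα₁⁰ − α₂⁰)`, `α = p/u`,
`α₁' = (sα₁⁰ − α₂⁰)/u` and `α₁ = α·α₁⁰`, the integers `α₁` and `α₁'` are
coprime. -/
theorem algorithm_alpha1_coprime (p q r s α₁₀ α₂₀ : ℤ)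
    (hp : 0 < p) (hdet : q * s + p * r = 1)
    (hα₁₀ : α₁₀ ≠ 0) (hα₂₀ : α₂₀ ≠ 0) (hcop : Int.gcd α₁₀ α₂₀ = 1)
    (u α α₁' α₁ α₂ : ℤ)
    (hu : u = Int.gcd p (s * α₁₀ - α₂₀))
    (hα : α = p / u)
    (hα₁' : α₁' = (s * α₁₀ - α₂₀) / u)
    (hα₁ : α₁ = α * α₁₀) (hα₂ : α₂ = α * α₂₀) :
    Int.gcd α₁ α₁' = 1 :=
  algorithm_alpha1_coprime_general p s α₁₀ α₂₀ hp hcop u α α₁' α₁ hu hα hα₁' hα₁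
end

section
/- Let p, q, r, s be integers with p > 0 and qs + pr = 1, and let α₁⁰, α₂⁰ be nonzero integers with gcd(α₁⁰,α₂⁰) = 1. Set u := gcd(p, sα₁⁰ − α₂⁰), α := p/u, α₁' := (sα₁⁰ − α₂⁰)/u, α₁ := α·α₁⁰ and α₂ := α·α₂⁰. Let β₁, β₁' be integers with α₁β₁' − β₁α₁' = 1, and set β₂ := −sβ₁ + pβ₁'. Then gcd(α₂, β₂) = 1. -/
/-!
With `t = sα₁⁰ − α₂⁰` one has `α·t = p·α₁'`, i.e. `α₂ = sα₁ − pα₁'`, while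
`β₂ = −sβ₁ + pβ₁'`. So `(α₂, β₂)` is the image of `(s, p)` under the integer matrix
`[[α₁, −α₁'], [−β₁, β₁']]` of determinant `1`, and `s, p` are coprime because `qs + pr = 1`.
-/

theorem IsCoprime.map_of_det_eq_one {R : Type*} [CommRing R] {x y a b c d : R}
    (hxy : IsCoprime x y) (hdet : a * d - b * c = 1) :
    IsCoprime (a * x + b * y) (c * x + d * y) := by
  obtain ⟨u, v, h⟩ := hxy
  exact ⟨u * d - v * c, v * a - u * b, by linear_combination (u * x + v * y) * hdet + h⟩

theorem Int.ediv_mul_eq_mul_ediv_of_dvd {a b c : ℤ} (hca : c ∣ a) (hcb : c ∣ b) :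
    a / c * b = a * (b / c) := by
  rw [← Int.mul_ediv_assoc' b hca, Int.mul_ediv_assoc a hcb]

theorem algorithm_allowable_invariant_general (p q r s α₁₀ α₂₀ : ℤ)
    (hdet : q * s + p * r = 1)
    (u α α₁' α₁ α₂ : ℤ)
    (hu : u = Int.gcd p (s * α₁₀ - α₂₀))
    (hα : α = p / u)
    (hα₁' : α₁' = (s * α₁₀ - α₂₀) / u)
    (hα₁ : α₁ = α * α₁₀) (hα₂ : α₂ = α * α₂₀)
    (β₁ β₁' β₂ : ℤ)
    (hβ : α₁ * β₁' - β₁ * α₁' = 1)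
    (hβ₂ : β₂ = -s * β₁ + p * β₁') :
    Int.gcd α₂ β₂ = 1 := by
  have hαt : α * (s * α₁₀ - α₂₀) = p * α₁' := by
    rw [hα, hα₁', hu]
    exact Int.ediv_mul_eq_mul_ediv_of_dvd (Int.gcd_dvd_left _ _) (Int.gcd_dvd_right _ _)
  have hsp : IsCoprime s p := ⟨q, r, by linear_combination hdet⟩
  have hα₂s : α₂ = α₁ * s + -α₁' * p := by
    rw [hα₁, hα₂]
    linear_combination -hαt
  have hβ₂s : β₂ = -β₁ * s + β₁' * p := by linear_combination hβ₂
  rw [← Int.isCoprime_iff_gcd_eq_one, hα₂s, hβ₂s]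
  exact hsp.map_of_det_eq_one (by linear_combination hβ)

/-- In the algorithm constructing a Seifert fibration of `L(p,q)` from coprime
nonzero integers `α₁⁰, α₂⁰`: with `u = gcd(p, sα₁⁰ − α₂⁰)`, `α = p/u`,
`α₁' = (sα₁⁰ − α₂⁰)/u`, `α₁ = α·α₁⁰`, `α₂ = α·α₂⁰`, `α₁β₁' − β₁α₁' = 1` and
`β₂ = −sβ₁ + pβ₁'`, the pair `(α₂, β₂)` satisfies `gcd(α₂,β₂) = 1`. -/
theorem algorithm_allowable_invariant (p q r s α₁₀ α₂₀ : ℤ)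
    (hp : 0 < p) (hdet : q * s + p * r = 1)
    (hα₁₀ : α₁₀ ≠ 0) (hα₂₀ : α₂₀ ≠ 0) (hcop : Int.gcd α₁₀ α₂₀ = 1)
    (u α α₁' α₁ α₂ : ℤ)
    (hu : u = Int.gcd p (s * α₁₀ - α₂₀))
    (hα : α = p / u)
    (hα₁' : α₁' = (s * α₁₀ - α₂₀) / u)
    (hα₁ : α₁ = α * α₁₀) (hα₂ : α₂ = α * α₂₀)
    (β₁ β₁' β₂ : ℤ)
    (hβ : α₁ * β₁' - β₁ * α₁' = 1)
    (hβ₂ : β₂ = -s * β₁ + p * β₁') :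
    Int.gcd α₂ β₂ = 1 :=
  algorithm_allowable_invariant_general p q r s α₁₀ α₂₀ hdet u α α₁' α₁ α₂ hu hα hα₁' hα₁ hα₂ β₁ β₁'
    β₂ hβ hβ₂
end

section
/- Let p, q, r, s be integers with p > 0 and qs + pr = 1, and let α₁⁰, α₂⁰ be nonzero integers with gcd(α₁⁰,α₂⁰) = 1. Set u := gcd(p, sα₁⁰ − α₂⁰), α := p/u, α₁' := (sα₁⁰ − α₂⁰)/u, α₁ := α·α₁⁰ and α₂ := α·α₂⁰. Let β₁, β₁' be integers with α₁β₁' − β₁α₁' = 1 and set β₂ := −sβ₁ + pβ₁'. Then for any integers α₂', β₂' with α₂β₂' − β₂α₂' = 1, one has α₁β₂' + β₁α₂' ≡ q (mod p). -/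
/-! Reducing the two gluing relations modulo `p` shows that both `q` and `α₁β₂' + β₁α₂'` are
inverses of `s` modulo `p`, because `α₂ ≡ sα₁` and `β₂ ≡ -sβ₁`; inverses are unique. -/

theorem Int.ModEq.of_mul_left_modEq_one {n a b c : ℤ} (hb : a * b ≡ 1 [ZMOD n])
    (hc : a * c ≡ 1 [ZMOD n]) : b ≡ c [ZMOD n] :=
  calc b = b * 1 := (mul_one b).symm
    _ ≡ b * (a * c) [ZMOD n] := hc.symm.mul_left b
    _ = a * b * c := by ring
    _ ≡ 1 * c [ZMOD n] := hb.mul_right c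
    _ = c := one_mul c

theorem Int.ediv_mul_eq_mul_ediv_of_dvd_s14 {u a b : ℤ} (ha : u ∣ a) (hb : u ∣ b) :
    a / u * b = a * (b / u) := by
  rw [← Int.mul_ediv_assoc' b ha, Int.mul_ediv_assoc a hb]

theorem Int.mul_modEq_one_of_det_eq_one {p s a₁ a₁' b₁ b₁' a₂ b₂ x y : ℤ}
    (ha₂ : a₂ = s * a₁ - p * a₁') (hb₂ : b₂ = -s * b₁ + p * b₁')
    (hdet : a₂ * y - b₂ * x = 1) : s * (a₁ * y + b₁ * x) ≡ 1 [ZMOD p] :=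
  Int.modEq_iff_add_fac.2 ⟨-(a₁' * y + b₁' * x), by linear_combination -hdet + y * ha₂ - x * hb₂⟩

theorem Int.ediv_gcd_mul_eq_mul_sub_mul {p s a b u : ℤ} (hu : u = Int.gcd p (s * a - b)) :
    p / u * b = s * (p / u * a) - p * ((s * a - b) / u) := by
  have hup : u ∣ p := hu ▸ Int.gcd_dvd_left p _
  have hum : u ∣ s * a - b := hu ▸ Int.gcd_dvd_right p _
  rw [← Int.ediv_mul_eq_mul_ediv_of_dvd_s14 hup hum]
  ring

theorem algorithm_second_invariant_general (p q r s α₁₀ α₂₀ : ℤ)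
    (hdet : q * s + p * r = 1)
    (u α α₁' α₁ α₂ : ℤ)
    (hu : u = Int.gcd p (s * α₁₀ - α₂₀))
    (hα : α = p / u)
    (hα₁' : α₁' = (s * α₁₀ - α₂₀) / u)
    (hα₁ : α₁ = α * α₁₀) (hα₂ : α₂ = α * α₂₀)
    (β₁ β₁' β₂ : ℤ)
    (hβ₂ : β₂ = -s * β₁ + p * β₁')
    (α₂' β₂' : ℤ) (hβ' : α₂ * β₂' - β₂ * α₂' = 1) :
    α₁ * β₂' + β₁ * α₂' ≡ q [ZMOD p] := by
  have hα₂_eq : α₂ = s * α₁ - p * α₁' := by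
    subst hα hα₁ hα₂ hα₁'
    exact Int.ediv_gcd_mul_eq_mul_sub_mul hu
  have hsq : s * q ≡ 1 [ZMOD p] := Int.modEq_iff_add_fac.2 ⟨r, by linear_combination -hdet⟩
  exact (Int.mul_modEq_one_of_det_eq_one hα₂_eq hβ₂ hβ').of_mul_left_modEq_one hsq

/-- In the algorithm constructing a Seifert fibration of `L(p,q)` from coprime
nonzero integers `α₁⁰, α₂⁰`: with `u = gcd(p, sα₁⁰ − α₂⁰)`, `α = p/u`,
`α₁' = (sα₁⁰ − α₂⁰)/u`, `α₁ = α·α₁⁰`, `α₂ = α·α₂⁰`, `α₁β₁' − β₁α₁' = 1` and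
`β₂ = −sβ₁ + pβ₁'`, any integers `α₂', β₂'` with `α₂β₂' − β₂α₂' = 1` satisfy
`α₁β₂' + β₁α₂' ≡ q (mod p)`. -/
theorem algorithm_second_invariant (p q r s α₁₀ α₂₀ : ℤ)
    (hp : 0 < p) (hdet : q * s + p * r = 1)
    (hα₁₀ : α₁₀ ≠ 0) (hα₂₀ : α₂₀ ≠ 0) (hcop : Int.gcd α₁₀ α₂₀ = 1)
    (u α α₁' α₁ α₂ : ℤ)
    (hu : u = Int.gcd p (s * α₁₀ - α₂₀))
    (hα : α = p / u)
    (hα₁' : α₁' = (s * α₁₀ - α₂₀) / u)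
    (hα₁ : α₁ = α * α₁₀) (hα₂ : α₂ = α * α₂₀)
    (β₁ β₁' β₂ : ℤ)
    (hβ : α₁ * β₁' - β₁ * α₁' = 1)
    (hβ₂ : β₂ = -s * β₁ + p * β₁')
    (α₂' β₂' : ℤ) (hβ' : α₂ * β₂' - β₂ * α₂' = 1) :
    α₁ * β₂' + β₁ * α₂' ≡ q [ZMOD p] :=
  algorithm_second_invariant_general p q r s α₁₀ α₂₀ hdet u α α₁' α₁ α₂ hu hα hα₁' hα₁ hα₂ β₁ β₁' β₂
    hβ₂ α₂' β₂' hβ'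
end

section
/- Let p be a positive integer, s an integer, and α₁⁰, α₂⁰ integers with gcd(α₁⁰,α₂⁰) = 1. Set u := gcd(p, sα₁⁰ − α₂⁰) and suppose u = gcd(p, sα₂⁰ − α₁⁰). Then u divides s² − 1. Moreover, if α := p/u and β₁ is an integer with gcd(α,β₁) = 1 and p divides β₁(1 − s²), then p divides 1 − s². -/
/-! If `u` divides both `s α₁ − α₂` and `s α₂ − α₁`, it divides `s (s α₁ − α₂) + (s α₂ − α₁) =
(s² − 1) α₁` and likewise `(s² − 1) α₂`, hence `s² − 1` by coprimality of `α₁, α₂`. For the second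
part, `p = u α` with `α = p / u` divides both `α (1 − s²)` (as `u ∣ 1 − s²`) and `β₁ (1 − s²)`,
hence `1 − s²` by coprimality of `α, β₁`. -/

theorem IsCoprime.dvd_of_dvd_mul_of_dvd_mul {R : Type*} [CommSemiring R] {a b d x : R}
    (h : IsCoprime a b) (ha : d ∣ a * x) (hb : d ∣ b * x) : d ∣ x := by
  obtain ⟨m, n, hmn⟩ := h
  have hx : x = m * (a * x) + n * (b * x) := by
    rw [← mul_assoc, ← mul_assoc, ← add_mul, hmn, one_mul]
  rw [hx]
  exact dvd_add (ha.mul_left m) (hb.mul_left n)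

theorem dvd_sq_sub_one_of_dvd_mul_sub {R : Type*} [CommRing R] {a b d s : R}
    (hab : IsCoprime a b) (ha : d ∣ s * a - b) (hb : d ∣ s * b - a) : d ∣ s ^ 2 - 1 := by
  refine hab.dvd_of_dvd_mul_of_dvd_mul ?_ ?_
  · have h : a * (s ^ 2 - 1) = s * (s * a - b) + (s * b - a) := by ring
    exact h ▸ dvd_add (ha.mul_left s) hb
  · have h : b * (s ^ 2 - 1) = (s * a - b) + s * (s * b - a) := by ring
    exact h ▸ dvd_add ha (hb.mul_left s)

theorem case_B_divisibility_general (p : ℤ) (s α₁₀ α₂₀ : ℤ)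
    (hcop : Int.gcd α₁₀ α₂₀ = 1)
    (u : ℤ) (hu : u = Int.gcd p (s * α₁₀ - α₂₀))
    (hu' : u = Int.gcd p (s * α₂₀ - α₁₀)) :
    u ∣ s ^ 2 - 1 ∧
      ∀ β₁ : ℤ, Int.gcd (p / u) β₁ = 1 → p ∣ β₁ * (1 - s ^ 2) → p ∣ 1 - s ^ 2 := by
  have hup : u ∣ p := hu ▸ Int.gcd_dvd_left p _
  have hsq : u ∣ s ^ 2 - 1 :=
    dvd_sq_sub_one_of_dvd_mul_sub (Int.isCoprime_iff_gcd_eq_one.mpr hcop)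
      (hu ▸ Int.gcd_dvd_right p _) (hu' ▸ Int.gcd_dvd_right p _)
  refine ⟨hsq, fun β₁ hβ₁ hdvd => ?_⟩
  have hα : p ∣ p / u * (1 - s ^ 2) := by
    nth_rewrite 1 [← Int.mul_ediv_cancel' hup, mul_comm u]
    exact mul_dvd_mul_left _ (dvd_sub_comm.mp hsq)
  exact (Int.isCoprime_iff_gcd_eq_one.mpr hβ₁).dvd_of_dvd_mul_of_dvd_mul hα hdvd

/-- If `u = gcd(p, sα₁⁰ − α₂⁰) = gcd(p, sα₂⁰ − α₁⁰)` with `gcd(α₁⁰,α₂⁰) = 1`,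
then `u` divides `s² − 1`; moreover for `α = p/u` and any `β₁` with
`gcd(α,β₁) = 1`, the divisibility `p ∣ β₁(1 − s²)` forces `p ∣ 1 − s²`. -/
theorem case_B_divisibility (p : ℤ) (hp : 0 < p) (s α₁₀ α₂₀ : ℤ)
    (hcop : Int.gcd α₁₀ α₂₀ = 1)
    (u : ℤ) (hu : u = Int.gcd p (s * α₁₀ - α₂₀))
    (hu' : u = Int.gcd p (s * α₂₀ - α₁₀)) :
    u ∣ s ^ 2 - 1 ∧
      ∀ β₁ : ℤ, Int.gcd (p / u) β₁ = 1 → p ∣ β₁ * (1 - s ^ 2) → p ∣ 1 - s ^ 2 :=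
  case_B_divisibility_general p s α₁₀ α₂₀ hcop u hu hu'
end

section
/- Let p be a positive integer, s an integer with gcd(p,s) = 1, and α₁⁰, α₂⁰ integers with gcd(α₁⁰,α₂⁰) = 1. Set u := gcd(p, sα₁⁰ − α₂⁰) and suppose u = gcd(p, sα₁⁰ + α₂⁰). Set α := p/u and α₁ := α·α₁⁰, and let β₁ be an integer with gcd(α₁,β₁) = 1. If p divides 2β₁, then p = 1 or p = 2. -/
/-! Any common divisor `u` of `p`, `sα₁⁰ - α₂⁰` and `sα₁⁰ + α₂⁰` divides `2α₂⁰` and `2sα₁⁰`,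
hence `2α₁⁰` (as `gcd(p,s) = 1`), hence `2`. Writing `p = αu`, the divisibility `p ∣ 2β₁`
together with `p ∣ 2α` and `gcd(α, β₁) = 1` gives `p ∣ 2`. -/

theorem dvd_two_of_dvd_mul_sub_of_dvd_mul_add {R : Type*} [CommRing R] {u s a b : R}
    (hus : IsCoprime u s) (hab : IsCoprime a b)
    (hsub : u ∣ s * a - b) (hadd : u ∣ s * a + b) : u ∣ 2 := by
  have h2b : u ∣ 2 * b := by
    simpa only [add_sub_sub_cancel, ← two_mul] using dvd_sub hadd hsub
  have h2a : u ∣ 2 * a := by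
    refine hus.dvd_of_dvd_mul_left ?_
    simpa only [add_add_sub_cancel, ← two_mul, mul_left_comm] using dvd_add hadd hsub
  obtain ⟨x, y, hxy⟩ := hab
  have := dvd_add (h2a.mul_left x) (h2b.mul_left y)
  rwa [mul_left_comm x, mul_left_comm y, ← mul_add, hxy, mul_one] at this

theorem IsCoprime.mul_dvd_of_dvd_of_mul_dvd_mul {R : Type*} [CommRing R] {a b c u : R}
    (hab : IsCoprime a b) (huc : u ∣ c) (hcb : a * u ∣ c * b) : a * u ∣ c := by
  have hca : a * u ∣ c * a := mul_comm a c ▸ mul_dvd_mul_left a huc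
  obtain ⟨x, y, hxy⟩ := hab
  have := dvd_add (hca.mul_left x) (hcb.mul_left y)
  rwa [mul_left_comm x, mul_left_comm y, ← mul_add, hxy, mul_one] at this

/-- If `u = gcd(p, sα₁⁰ − α₂⁰) = gcd(p, sα₁⁰ + α₂⁰)` with `gcd(p,s) = 1` and
`gcd(α₁⁰,α₂⁰) = 1`, and `β₁` is coprime to `α₁ = (p/u)·α₁⁰`, then `p ∣ 2β₁`
forces `p ∈ {1, 2}`. -/
theorem case_A_divisibility (p : ℤ) (hp : 0 < p) (s α₁₀ α₂₀ : ℤ)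
    (hps : Int.gcd p s = 1) (hcop : Int.gcd α₁₀ α₂₀ = 1)
    (u : ℤ) (hu : u = Int.gcd p (s * α₁₀ - α₂₀))
    (hu' : u = Int.gcd p (s * α₁₀ + α₂₀))
    (α α₁ : ℤ) (hα : α = p / u) (hα₁ : α₁ = α * α₁₀)
    (β₁ : ℤ) (hβ₁ : Int.gcd α₁ β₁ = 1)
    (hdvd : p ∣ 2 * β₁) :
    p = 1 ∨ p = 2 := by
  have hup : u ∣ p := hu ▸ Int.gcd_dvd_left _ _
  have hus : IsCoprime u s :=
    (Int.isCoprime_iff_gcd_eq_one.mpr hps).of_isCoprime_of_dvd_left hup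
  have hu2 : u ∣ 2 :=
    dvd_two_of_dvd_mul_sub_of_dvd_mul_add hus (Int.isCoprime_iff_gcd_eq_one.mpr hcop)
      (hu ▸ Int.gcd_dvd_right _ _) (hu' ▸ Int.gcd_dvd_right _ _)
  have hαβ : IsCoprime α β₁ :=
    (Int.isCoprime_iff_gcd_eq_one.mpr hβ₁).of_isCoprime_of_dvd_left ⟨α₁₀, hα₁⟩
  have hpαu : p = α * u := by rw [hα, Int.ediv_mul_cancel hup]
  have hp2 : p ∣ 2 := hpαu ▸ hαβ.mul_dvd_of_dvd_of_mul_dvd_mul hu2 (hpαu ▸ hdvd)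
  have := Int.le_of_dvd two_pos hp2
  omega
end

section
/- Let p ≥ 1 and q be integers with gcd(p,q) = 1, and let k₁, k₂ be nonzero integers with gcd(k₁,k₂) = 1. Let C := { (e^{ik₁t}/√2, e^{ik₂t}/√2) : t ∈ ℝ } ⊂ ℂ², a regular fibre of the Seifert fibration of S³ induced by the circle action θ·(z₁,z₂) = (e^{ik₁θ}z₁, e^{ik₂θ}z₂). Then the number of ℓ ∈ {0, 1, …, p−1} for which the rotation (z₁,z₂) ↦ (e^{2πiℓ/p}z₁, e^{2πiqℓ/p}z₂) maps the set C onto itself equals gcd(p, qk₁ − k₂). -/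
/-!
The rotation `(w₁, w₂)` maps the orbit `C` of the one-parameter group `t ↦ (e^{ik₁t}, e^{ik₂t})`
onto itself iff it maps the base point into `C`, i.e. iff `(w₁, w₂) = (e^{ik₁s}, e^{ik₂s})` for
some `s`. For `w = (ζ^ℓ, ζ^{qℓ})` with `ζ = e^{2πi/p}` and `s = 2πx/p` this asks for a real `x`
with `k₁x ≡ ℓ` and `k₂x ≡ qℓ` modulo `p`. Eliminating `x` gives `p ∣ (qk₁ − k₂)ℓ`; conversely,
if `uk₁ + vk₂ = 1` then `x = uℓ + vqℓ` is a solution. Those `ℓ` form the kernel of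
multiplication by `qk₁ − k₂` on `ℤ/p`, which has `gcd(p, qk₁ − k₂)` elements.
-/

open Complex Real

theorem image_mul_range_exp_div_eq_iff {a₁ a₂ c : ℂ} (hc : c ≠ 0) (w₁ w₂ : ℂ) :
    (fun z : ℂ × ℂ => (w₁ * z.1, w₂ * z.2)) ''
        Set.range (fun t : ℝ => (exp (a₁ * t) / c, exp (a₂ * t) / c)) =
      Set.range (fun t : ℝ => (exp (a₁ * t) / c, exp (a₂ * t) / c)) ↔
    ∃ s : ℝ, w₁ = exp (a₁ * s) ∧ w₂ = exp (a₂ * s) := by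
  constructor
  · intro h
    obtain ⟨s, hs⟩ : (w₁ * (exp (a₁ * (0 : ℝ)) / c), w₂ * (exp (a₂ * (0 : ℝ)) / c)) ∈
        Set.range (fun t : ℝ => (exp (a₁ * t) / c, exp (a₂ * t) / c)) :=
      h ▸ Set.mem_image_of_mem _ (Set.mem_range_self 0)
    simp only [Prod.mk.injEq, ofReal_zero, mul_zero, Complex.exp_zero, ← mul_div_assoc,
      mul_one] at hs
    exact ⟨s, ((div_left_inj' hc).mp hs.1).symm, ((div_left_inj' hc).mp hs.2).symm⟩
  · rintro ⟨s, rfl, rfl⟩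
    rw [← Set.range_comp, ← (add_left_surjective s).range_comp
      (fun t : ℝ => (exp (a₁ * t) / c, exp (a₂ * t) / c))]
    congr 1
    ext t : 1
    simp only [Function.comp_apply, ofReal_add, mul_add, Complex.exp_add, mul_div_assoc]

theorem exp_two_pi_I_div_eq_iff {p : ℤ} (hp : p ≠ 0) (r : ℤ) (x : ℝ) :
    exp (2 * π * I * r / p) = exp (2 * π * I * x / p) ↔ ∃ a : ℤ, r - x = p * a := by
  have hp' : (p : ℂ) ≠ 0 := Int.cast_ne_zero.mpr hp
  have hζ : 2 * π * I / p ≠ 0 := by simp [pi_ne_zero, I_ne_zero, hp']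
  rw [exp_eq_exp_iff_exists_int]
  refine exists_congr fun a => ?_
  rw [mul_div_right_comm, mul_div_right_comm _ (x : ℂ),
    show a * (2 * π * I) = 2 * π * I / p * (p * a) by field_simp, ← mul_add,
    mul_right_inj' hζ, ← sub_eq_iff_eq_add', ← ofReal_inj]
  push_cast
  rfl

theorem exists_common_real_solution_iff_dvd {p k₁ k₂ : ℤ} (hk : IsCoprime k₁ k₂) (r₁ r₂ : ℤ) :
    (∃ x : ℝ, (∃ a : ℤ, r₁ - k₁ * x = p * a) ∧ ∃ b : ℤ, r₂ - k₂ * x = p * b) ↔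
      p ∣ k₁ * r₂ - k₂ * r₁ := by
  constructor
  · rintro ⟨x, ⟨a, ha⟩, ⟨b, hb⟩⟩
    refine ⟨k₁ * b - k₂ * a, ?_⟩
    have : ((k₁ * r₂ - k₂ * r₁ : ℤ) : ℝ) = p * (k₁ * b - k₂ * a) := by
      push_cast
      linear_combination k₁ * hb - k₂ * ha
    exact_mod_cast this
  · rintro ⟨m, hm⟩
    obtain ⟨u, v, huv⟩ := hk
    refine ⟨u * r₁ + v * r₂, ⟨-(v * m), ?_⟩, ⟨u * m, ?_⟩⟩
    · exact_mod_cast (by linear_combination (-v) * hm - r₁ * huv :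
        (r₁ - k₁ * (u * r₁ + v * r₂) : ℤ) = p * -(v * m))
    · exact_mod_cast (by linear_combination u * hm - r₂ * huv :
        (r₂ - k₂ * (u * r₁ + v * r₂) : ℤ) = p * (u * m))

theorem exists_exp_eq_exp_iff_dvd {p k₁ k₂ : ℤ} (hp : p ≠ 0) (hk : IsCoprime k₁ k₂)
    (r₁ r₂ : ℤ) :
    (∃ s : ℝ, exp (2 * π * I * r₁ / p) = exp (I * k₁ * s) ∧
        exp (2 * π * I * r₂ / p) = exp (I * k₂ * s)) ↔
      p ∣ k₁ * r₂ - k₂ * r₁ := by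
  have hscale : Function.Surjective fun x : ℝ => 2 * π * x / p := fun s =>
    ⟨p * s / (2 * π), by field_simp⟩
  have hangle (k : ℤ) (x : ℝ) :
      I * k * ((2 * π * x / p : ℝ) : ℂ) = 2 * π * I * ((k * x : ℝ) : ℂ) / p := by
    push_cast
    ring
  rw [hscale.exists, ← exists_common_real_solution_iff_dvd hk]
  simp only [hangle, exp_two_pi_I_div_eq_iff hp]

theorem ncard_setOf_dvd_mul_natCast (p d : ℕ) [NeZero p] :
    {ℓ : ℤ | 0 ≤ ℓ ∧ ℓ < p ∧ (p : ℤ) ∣ d * ℓ}.ncard = p.gcd d := by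
  have hset : {ℓ : ℤ | 0 ≤ ℓ ∧ ℓ < p ∧ (p : ℤ) ∣ d * ℓ} =
      (fun x : ZMod p => (x.val : ℤ)) '' (nsmulAddMonoidHom d : ZMod p →+ ZMod p).ker := by
    ext ℓ
    constructor
    · rintro ⟨h0, hlt, hdvd⟩
      refine ⟨ℓ, ?_, by dsimp only; rw [ZMod.val_intCast, Int.emod_eq_of_lt h0 hlt]⟩
      rw [← ZMod.intCast_zmod_eq_zero_iff_dvd] at hdvd
      simpa using hdvd
    · rintro ⟨x, hx, rfl⟩
      refine ⟨by positivity, by dsimp only; exact_mod_cast x.val_lt, ?_⟩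
      rw [← ZMod.intCast_zmod_eq_zero_iff_dvd]
      simpa using hx
  rw [hset,
    Set.ncard_image_of_injective _ fun x y h => ZMod.val_injective p (Nat.cast_injective h),
    ← Nat.card_coe_set_eq]
  exact (IsAddCyclic.card_nsmulAddMonoidHom_ker (ZMod p) d).trans (by rw [Nat.card_zmod])

theorem ncard_setOf_dvd_mul {p : ℤ} (hp : 0 < p) (d : ℤ) :
    {ℓ : ℤ | 0 ≤ ℓ ∧ ℓ < p ∧ p ∣ d * ℓ}.ncard = Int.gcd p d := by
  lift p to ℕ using hp.le
  have : NeZero p := ⟨by omega⟩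
  have hdvd (ℓ : ℤ) : (p : ℤ) ∣ d * ℓ ↔ (p : ℤ) ∣ d.natAbs * ℓ := by
    rcases abs_choice d with h | h <;> simp [h]
  simp_rw [hdvd]
  exact ncard_setOf_dvd_mul_natCast p d.natAbs

theorem fibre_stabilizer_card_general (p q : ℤ) (hp : 1 ≤ p)
    (k₁ k₂ : ℤ) (hk : Int.gcd k₁ k₂ = 1) :
    {ℓ : ℤ | 0 ≤ ℓ ∧ ℓ < p ∧
      (fun zz : ℂ × ℂ =>
          (Complex.exp (2 * π * Complex.I * ℓ / p) * zz.1,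
            Complex.exp (2 * π * Complex.I * (q * ℓ) / p) * zz.2)) ''
        (Set.range fun t : ℝ =>
          ((Complex.exp (Complex.I * k₁ * t) / Real.sqrt 2 : ℂ),
            (Complex.exp (Complex.I * k₂ * t) / Real.sqrt 2 : ℂ))) =
      (Set.range fun t : ℝ =>
          ((Complex.exp (Complex.I * k₁ * t) / Real.sqrt 2 : ℂ),
            (Complex.exp (Complex.I * k₂ * t) / Real.sqrt 2 : ℂ)))}.ncard =
    Int.gcd p (q * k₁ - k₂) := by
  have hsqrt2 : ((√2 : ℝ) : ℂ) ≠ 0 := ofReal_ne_zero.mpr (by positivity)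
  rw [← ncard_setOf_dvd_mul (by omega) (q * k₁ - k₂)]
  congr 1
  ext ℓ
  refine and_congr_right' (and_congr_right' ?_)
  rw [image_mul_range_exp_div_eq_iff hsqrt2, ← Int.cast_mul,
    exists_exp_eq_exp_iff_dvd (by omega) (Int.isCoprime_iff_gcd_eq_one.mpr hk)]
  congr! 1
  ring

/-- The number of elements of `ℤ/p` whose action on `S³` leaves the regular
fibre `C = {(e^{ik₁t}/√2, e^{ik₂t}/√2) : t ∈ ℝ}` of the Seifert fibration
induced by the circle action `θ·(z₁,z₂) = (e^{ik₁θ}z₁, e^{ik₂θ}z₂)` invariant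
equals `gcd(p, qk₁ − k₂)`. -/
theorem fibre_stabilizer_card (p q : ℤ) (hp : 1 ≤ p) (hpq : Int.gcd p q = 1)
    (k₁ k₂ : ℤ) (hk₁ : k₁ ≠ 0) (hk₂ : k₂ ≠ 0) (hk : Int.gcd k₁ k₂ = 1) :
    {ℓ : ℤ | 0 ≤ ℓ ∧ ℓ < p ∧
      (fun zz : ℂ × ℂ =>
          (Complex.exp (2 * π * Complex.I * ℓ / p) * zz.1,
            Complex.exp (2 * π * Complex.I * (q * ℓ) / p) * zz.2)) ''
        (Set.range fun t : ℝ =>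
          ((Complex.exp (Complex.I * k₁ * t) / Real.sqrt 2 : ℂ),
            (Complex.exp (Complex.I * k₂ * t) / Real.sqrt 2 : ℂ))) =
      (Set.range fun t : ℝ =>
          ((Complex.exp (Complex.I * k₁ * t) / Real.sqrt 2 : ℂ),
            (Complex.exp (Complex.I * k₂ * t) / Real.sqrt 2 : ℂ)))}.ncard =
    Int.gcd p (q * k₁ - k₂) :=
  fibre_stabilizer_card_general p q hp k₁ k₂ hk
end
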